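/- Let H = ⊕_{j=a}^{b} O_{ℙ¹}(j)^{m_j} (a ≤ b, m_a, m_b ≠ 0) be the spectrum of a semistable rank-2 vector bundle E on Z, with d = deg(H) and r = rk(H), and assume that for a generic S ∈ |L| the system |K_S^{−1}| is ample. Then a ≥ (d−1)/(r+2) − (r+1)/2 and b ≤ (d−1)/(r+2) + (r+1)/2. -/

import Mathlib

/-!
Everything is combinatorics of the multiplicity function `m`. Its part in degrees `≥ 0` contains
the filled staircase `1, …, b`, hence has rank at least `b` and degree at least `b(b+1)/2`. Its
part in degrees `< 0`, reflected by `j ↦ -1 - j`, is supported on a staircase `0, 1, …, n` filled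
from `1` on; peeling off the top step by induction bounds its degree by `q(q+1)/2`, `q` its rank.
Adding the two estimates gives the bound on `b`. The bound on `a` is the bound on `b` for
`H^∨(-1)`, whose multiplicities are `j ↦ m (-1 - j)`: this reflection preserves the connectedness
conditions and exchanges the roles of `a` and `b`.
-/

namespace SplitType

open Finsupp

def rank (m : ℤ →₀ ℕ) : ℕ := m.sum fun _ n => n

def degree (m : ℤ →₀ ℕ) : ℤ := m.sum fun j n => j * (n : ℤ)

def dualTwist (m : ℤ →₀ ℕ) : ℤ →₀ ℕ := equivMapDomain (Equiv.subLeft (-1)) m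

lemma dualTwist_apply (m : ℤ →₀ ℕ) (k : ℤ) : dualTwist m k = m (-1 - k) := by
  rw [dualTwist, equivMapDomain_apply]
  congr 1
  exact (Equiv.subLeft (-1)).symm_apply_eq.mpr (by simp)

lemma rank_dualTwist (m : ℤ →₀ ℕ) : rank (dualTwist m) = rank m := by
  simp only [rank, dualTwist, sum_equivMapDomain]

lemma degree_dualTwist (m : ℤ →₀ ℕ) : degree (dualTwist m) = -rank m - degree m := by
  rw [degree, dualTwist, sum_equivMapDomain]
  simp only [Equiv.subLeft_apply, sum, sub_mul, neg_one_mul, Finset.sum_sub_distrib,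
    Finset.sum_neg_distrib, rank, degree, Nat.cast_sum]

lemma rank_add (m m' : ℤ →₀ ℕ) : rank (m + m') = rank m + rank m' :=
  sum_add_index' (fun _ => rfl) fun _ _ _ => rfl

lemma degree_add (m m' : ℤ →₀ ℕ) : degree (m + m') = degree m + degree m' :=
  sum_add_index' (fun _ => by simp) fun _ _ _ => by push_cast; ring

lemma rank_single (j : ℤ) (n : ℕ) : rank (single j n) = n :=
  sum_single_index rfl

lemma degree_single (j : ℤ) (n : ℕ) : degree (single j n) = j * n :=
  sum_single_index (by simp)

lemma rank_erase_add (m : ℤ →₀ ℕ) (j : ℤ) : rank (m.erase j) + m j = rank m := by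
  conv_rhs => rw [← erase_add_single j m, rank_add, rank_single]

lemma degree_erase_add (m : ℤ →₀ ℕ) (j : ℤ) : degree (m.erase j) + j * m j = degree m := by
  conv_rhs => rw [← erase_add_single j m, degree_add, degree_single]

lemma degree_nonneg {m : ℤ →₀ ℕ} (hm : ∀ j, m j ≠ 0 → 0 ≤ j) : 0 ≤ degree m :=
  Finset.sum_nonneg fun j hj => mul_nonneg (hm j (mem_support_iff.mp hj)) (Nat.cast_nonneg _)

lemma le_rank_of_filled {m : ℤ →₀ ℕ} {n : ℕ} (hfill : ∀ j : ℤ, 1 ≤ j → j ≤ n → m j ≠ 0) :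
    n ≤ rank m := by
  induction n generalizing m with
  | zero => exact Nat.zero_le _
  | succ n ih =>
    have hrest := ih (m := m.erase (n + 1 : ℤ)) fun j h1 h2 => by
      rw [erase_ne (by omega)]; exact hfill j h1 (by omega)
    have htop := hfill (n + 1) (by omega) (by push_cast; rfl)
    have := rank_erase_add m (n + 1 : ℤ)
    omega

lemma mul_succ_le_two_mul_degree_of_filled {m : ℤ →₀ ℕ} {n : ℕ} (hm : ∀ j, m j ≠ 0 → 0 ≤ j)
    (hfill : ∀ j : ℤ, 1 ≤ j → j ≤ n → m j ≠ 0) : (n : ℤ) * (n + 1) ≤ 2 * degree m := by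
  induction n generalizing m with
  | zero => simpa using degree_nonneg hm
  | succ n ih =>
    have hrest := ih (m := m.erase (n + 1 : ℤ))
      (fun j hj => hm j (by rwa [erase_ne (by rintro rfl; simp at hj)] at hj))
      fun j h1 h2 => by rw [erase_ne (by omega)]; exact hfill j h1 (by omega)
    have htop : 1 ≤ (m (n + 1) : ℤ) := by
      have := hfill (n + 1) (by omega) (by push_cast; rfl); omega
    have := degree_erase_add m (n + 1 : ℤ)
    push_cast
    nlinarith

lemma two_mul_degree_le_of_filled {m : ℤ →₀ ℕ} {n : ℕ} (hm : ∀ j, m j ≠ 0 → 0 ≤ j ∧ j ≤ n)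
    (hfill : ∀ j : ℤ, 1 ≤ j → j ≤ n → m j ≠ 0) :
    2 * degree m ≤ rank m * (rank m + 1) := by
  induction n generalizing m with
  | zero =>
    have : degree m = 0 := Finset.sum_eq_zero fun j hj => by
      have := hm j (mem_support_iff.mp hj); simp [show j = 0 by omega]
    rw [this]; positivity
  | succ n ih =>
    have hsupp : ∀ j, m.erase (n + 1 : ℤ) j ≠ 0 → 0 ≤ j ∧ j ≤ n := fun j hj => by
      have hne : j ≠ n + 1 := by rintro rfl; simp at hj
      rw [erase_ne hne] at hj
      have := hm j hj; push_cast at this; omega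
    have hfill' : ∀ j : ℤ, 1 ≤ j → j ≤ n → m.erase (n + 1 : ℤ) j ≠ 0 := fun j h1 h2 => by
      rw [erase_ne (by omega)]; exact hfill j h1 (by omega)
    have hrest := ih hsupp hfill'
    have hlow : n ≤ rank (m.erase (n + 1 : ℤ)) := le_rank_of_filled hfill'
    have htop : 1 ≤ m (n + 1 : ℤ) :=
      Nat.one_le_iff_ne_zero.mpr (hfill (n + 1) (by omega) (by push_cast; rfl))
    have hr := rank_erase_add m (n + 1 : ℤ)
    have hd := degree_erase_add m (n + 1 : ℤ)
    rw [← hr, ← hd]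
    push_cast
    nlinarith

structure IsConnected (m : ℤ →₀ ℕ) (a b : ℤ) : Prop where
  supp : ∀ j, m j ≠ 0 → a ≤ j ∧ j ≤ b
  fill_pos : ∀ j, 1 ≤ j → j ≤ b → m j ≠ 0
  fill_neg : ∀ j, a ≤ j → j ≤ -2 → m j ≠ 0

lemma IsConnected.dualTwist {m : ℤ →₀ ℕ} {a b : ℤ} (h : IsConnected m a b) :
    IsConnected (dualTwist m) (-1 - b) (-1 - a) where
  supp j hj := by rw [dualTwist_apply] at hj; have := h.supp _ hj; omega
  fill_pos j h1 h2 := by rw [dualTwist_apply]; exact h.fill_neg _ (by omega) (by omega)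
  fill_neg j h1 h2 := by rw [dualTwist_apply]; exact h.fill_pos _ (by omega) (by omega)

lemma IsConnected.two_mul_top_mul_le {m : ℤ →₀ ℕ} {a b : ℤ} (h : IsConnected m a b) :
    2 * b * (rank m + 2) ≤ 2 * degree m + (rank m + 1) * (rank m + 2) - 2 := by
  set neg := m.filter (· < 0)
  set pos := m.filter (¬ · < 0)
  have hsplit : neg + pos = m := filter_add_filter_not m (· < 0)
  have hrank := rank_add neg pos
  have hdeg := degree_add neg pos
  rw [hsplit] at hrank hdeg
  have hpos_nonneg : ∀ j, pos j ≠ 0 → 0 ≤ j := fun j hj => by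
    rw [← mem_support_iff, support_filter, Finset.mem_filter] at hj; omega
  have hpos_fill : ∀ j : ℤ, 1 ≤ j → j ≤ b.toNat → pos j ≠ 0 := fun j h1 h2 => by
    rw [filter_apply_pos (¬ · < 0) m (show ¬ j < 0 by omega)]
    exact h.fill_pos j h1 (by omega)
  set negDual := SplitType.dualTwist neg
  have hnegDual_supp : ∀ j, negDual j ≠ 0 → 0 ≤ j ∧ j ≤ (-1 - a).toNat := fun j hj => by
    rw [dualTwist_apply, ← mem_support_iff, support_filter, Finset.mem_filter,
      mem_support_iff] at hj
    have := (h.supp _ hj.1).1; omega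
  have hnegDual_fill : ∀ j : ℤ, 1 ≤ j → j ≤ (-1 - a).toNat → negDual j ≠ 0 := fun j h1 h2 => by
    rw [dualTwist_apply, filter_apply_pos (· < 0) m (show -1 - j < 0 by omega)]
    exact h.fill_neg _ (by omega) (by omega)
  have hR := le_rank_of_filled hpos_fill
  have hD := mul_succ_le_two_mul_degree_of_filled hpos_nonneg hpos_fill
  have hN := two_mul_degree_le_of_filled hnegDual_supp hnegDual_fill
  rw [rank_dualTwist, degree_dualTwist] at hN
  have hb : b ≤ b.toNat := Int.self_le_toNat b
  rw [hrank, hdeg]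
  push_cast
  nlinarith

lemma IsConnected.two_mul_degree_le {m : ℤ →₀ ℕ} {a b : ℤ} (h : IsConnected m a b) :
    2 * degree m ≤ (rank m + 2) * (2 * a + rank m + 1) + 2 := by
  have := h.dualTwist.two_mul_top_mul_le
  rw [rank_dualTwist, degree_dualTwist] at this
  linarith

end SplitType

theorem spectrum_bounds_general
    (Sheaf : Type*)
    (spec : Sheaf → (ℤ →₀ ℕ))
    (E : Sheaf)
    (a b : ℤ)
    (ha : spec E a ≠ 0) (hb : spec E b ≠ 0)
    (hsupp : ∀ j : ℤ, spec E j ≠ 0 → a ≤ j ∧ j ≤ b)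
    -- connectedness of the spectrum (theorem 4.3 of the paper)
    (hconn₁ : 1 < b → ∀ j : ℤ, 1 ≤ j → j ≤ b - 1 → spec E j ≠ 0)
    (hconn₂ : a < -2 → ∀ j : ℤ, a + 1 ≤ j → j ≤ -2 → spec E j ≠ 0)
    -- r = rk H and d = deg H
    (r : ℕ) (hr : r = (spec E).sum fun _ mj => mj)
    (d : ℤ) (hd : d = (spec E).sum fun j mj => j * (mj : ℤ)) :
    ((a : ℚ) ≥ ((d : ℚ) - 1) / ((r : ℚ) + 2) - ((r : ℚ) + 1) / 2) ∧
    ((b : ℚ) ≤ ((d : ℚ) - 1) / ((r : ℚ) + 2) + ((r : ℚ) + 1) / 2) := by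
  have hconn : SplitType.IsConnected (spec E) a b := by
    refine ⟨hsupp, fun j h1 h2 => ?_, fun j h1 h2 => ?_⟩
    · rcases h2.lt_or_eq with h2 | rfl
      exacts [hconn₁ (by omega) j h1 (by omega), hb]
    · rcases h1.lt_or_eq with h1 | rfl
      exacts [hconn₂ (by omega) j (by omega) h2, ha]
  have hlow := hconn.two_mul_degree_le
  have hup := hconn.two_mul_top_mul_le
  rw [SplitType.rank, SplitType.degree, ← hr, ← hd] at hlow hup
  have hlow' : 2 * (d : ℚ) ≤ (r + 2) * (2 * a + r + 1) + 2 := by exact_mod_cast hlow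
  have hup' : 2 * (b : ℚ) * (r + 2) ≤ 2 * d + (r + 1) * (r + 2) - 2 := by exact_mod_cast hup
  have hpos : (0 : ℚ) < r + 2 := by positivity
  constructor
  · rw [ge_iff_le, sub_le_iff_le_add, div_le_iff₀ hpos]
    linarith
  · rw [← sub_le_iff_le_add, le_div_iff₀ hpos]
    linarith

theorem spectrum_bounds
    (Sheaf : Type*)
    (rank : Sheaf → ℕ)
    (Semistable Normalized : Sheaf → Prop)
    (spec : Sheaf → (ℤ →₀ ℕ))
    (AmpleAnticanGeneric : Prop) (hample : AmpleAnticanGeneric)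
    (E : Sheaf) (hrk : rank E = 2) (hss : Semistable E) (hnorm : Normalized E)
    (a b : ℤ) (hab : a ≤ b)
    (ha : spec E a ≠ 0) (hb : spec E b ≠ 0)
    (hsupp : ∀ j : ℤ, spec E j ≠ 0 → a ≤ j ∧ j ≤ b)
    -- connectedness of the spectrum (theorem 4.3 of the paper)
    (hconn₁ : 1 < b → ∀ j : ℤ, 1 ≤ j → j ≤ b - 1 → spec E j ≠ 0)
    (hconn₂ : a < -2 → ∀ j : ℤ, a + 1 ≤ j → j ≤ -2 → spec E j ≠ 0)
    -- r = rk H and d = deg H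
    (r : ℕ) (hr : r = (spec E).sum fun _ mj => mj)
    (d : ℤ) (hd : d = (spec E).sum fun j mj => j * (mj : ℤ)) :
    ((a : ℚ) ≥ ((d : ℚ) - 1) / ((r : ℚ) + 2) - ((r : ℚ) + 1) / 2) ∧
    ((b : ℚ) ≤ ((d : ℚ) - 1) / ((r : ℚ) + 2) + ((r : ℚ) + 1) / 2) :=
  spectrum_bounds_general Sheaf spec E a b ha hb hsupp hconn₁ hconn₂ r hr d hd
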